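/- (DoS attack only: ᾱ = 0, no deception signal.) Assume: μ > 1, 0 < ρ_s < 1, ρ_u > 0, β̄ ∈ [0,1], c := β̄(1+ρ_u)/(1−ρ_s) < 1, and there exist symmetric positive definite matrices P_p ∈ ℝ^{2n×2n} (p = 1,…,m) such that Π_p ⪯ 0 and Ψ_p ⪯ 0 for all p, and Ω_{pq} ⪯ 0 and P_p ⪯ μ P_q for all p ≠ q. Set μ̄ = μ(2−β̄−c)/(1−c) and assume the switching signal σ has dwell time τ_d with μ̄(1−ρ_s)^{τ_d} < 1. Then the closed-loop switched system subject to DoS attack is asymptotically stable in the mean square sense: lim_{k→∞} E‖x̃(k)‖² = 0. -/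

import Mathlib

open Matrix MeasureTheory ProbabilityTheory Filter

noncomputable section

/-- `M ⪯ 0`: the symmetric part of `M` is negative semidefinite. -/
def SymNegSemidef {l : Type*} [Fintype l] (M : Matrix l l ℝ) : Prop :=
  (-(((1 : ℝ) / 2) • (M + Mᵀ))).PosSemidef

/-- A deterministic switching signal `σ` has dwell time `τ`: any two distinct
switching instants (times `k+1` with `σ (k+1) ≠ σ k`) are at least `τ` apart. -/
def HasDwellTime {m : ℕ} (σ : ℕ → Fin m) (τ : ℕ) : Prop :=
  ∀ j k : ℕ, j < k → σ (j + 1) ≠ σ j → σ (k + 1) ≠ σ k → j + τ ≤ k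

/-- `A¹_p = [[A + (1-β̄)BK, β̄BK],[(1-β̄)I, β̄I]]` (DoS-only case). -/
def blkA1d (n : ℕ) (A BK : Matrix (Fin n) (Fin n) ℝ) (bB : ℝ) :
    Matrix (Fin n ⊕ Fin n) (Fin n ⊕ Fin n) ℝ :=
  fromBlocks (A + (1 - bB) • BK) (bB • BK)
    ((1 - bB) • (1 : Matrix (Fin n) (Fin n) ℝ)) (bB • (1 : Matrix (Fin n) (Fin n) ℝ))

/-- `A² = [[0, BK],[0, I]]`. -/
def blkA2 (n : ℕ) (BK : Matrix (Fin n) (Fin n) ℝ) :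
    Matrix (Fin n ⊕ Fin n) (Fin n ⊕ Fin n) ℝ :=
  fromBlocks 0 BK 0 (1 : Matrix (Fin n) (Fin n) ℝ)

/-- `A³ = [[BK, 0],[I, 0]]`. -/
def blkA3 (n : ℕ) (BK : Matrix (Fin n) (Fin n) ℝ) :
    Matrix (Fin n ⊕ Fin n) (Fin n ⊕ Fin n) ℝ :=
  fromBlocks BK 0 (1 : Matrix (Fin n) (Fin n) ℝ) 0

/-- `Ā¹_{pq} = [[A_p, B_pK_q],[0, I]]`. -/
def blkAbar1 (n : ℕ) (A BKq : Matrix (Fin n) (Fin n) ℝ) :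
    Matrix (Fin n ⊕ Fin n) (Fin n ⊕ Fin n) ℝ :=
  fromBlocks A BKq 0 (1 : Matrix (Fin n) (Fin n) ℝ)

/-- `Ã¹_p = [[A + BK, 0],[I, 0]]` (DoS-only case). -/
def blkAt1d (n : ℕ) (A BK : Matrix (Fin n) (Fin n) ℝ) :
    Matrix (Fin n ⊕ Fin n) (Fin n ⊕ Fin n) ℝ :=
  fromBlocks (A + BK) 0 (1 : Matrix (Fin n) (Fin n) ℝ) 0

/-- `Π_p` of the synchronous-stage LMI, DoS-only case (cross terms symmetrized). -/
def PiMatD (n : ℕ) (A BK : Matrix (Fin n) (Fin n) ℝ)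
    (P : Matrix (Fin n ⊕ Fin n) (Fin n ⊕ Fin n) ℝ) (bB rhoS : ℝ) :
    Matrix (Fin n ⊕ Fin n) (Fin n ⊕ Fin n) ℝ :=
  let bT : ℝ := bB * (1 - bB)
  let A1 := blkA1d n A BK bB
  let A2 := blkA2 n BK
  let A3 := blkA3 n BK
  A1ᵀ * P * A1 + bT • (A2ᵀ * P * A2) - (1 - rhoS) • P
    - bT • (A2ᵀ * P * A3 + A3ᵀ * P * A2) + bT • (A3ᵀ * P * A3)

/-- `Ω_{pq} = (Ā¹_{pq})ᵀ P_p Ā¹_{pq} - (1+ρᵤ) P_p`. -/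
def OmegaMat (n : ℕ) (A BKq : Matrix (Fin n) (Fin n) ℝ)
    (P : Matrix (Fin n ⊕ Fin n) (Fin n ⊕ Fin n) ℝ) (rhoU : ℝ) :
    Matrix (Fin n ⊕ Fin n) (Fin n ⊕ Fin n) ℝ :=
  (blkAbar1 n A BKq)ᵀ * P * blkAbar1 n A BKq - (1 + rhoU) • P

/-- `Ψ_p = (Ã¹_p)ᵀ P_p Ã¹_p - (1-ρₛ) P_p` (DoS-only case). -/
def PsiMatD (n : ℕ) (A BK : Matrix (Fin n) (Fin n) ℝ)
    (P : Matrix (Fin n ⊕ Fin n) (Fin n ⊕ Fin n) ℝ) (rhoS : ℝ) :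
    Matrix (Fin n ⊕ Fin n) (Fin n ⊕ Fin n) ℝ :=
  (blkAt1d n A BK)ᵀ * P * blkAt1d n A BK - (1 - rhoS) • P

/-!
Under packet losses the closed loop is a Markov jump system whose extra state is the mode `σ̄`
held by the controller. Take the Lyapunov function `V_k = x̃ᵀ P_{σ(k)} x̃`, weighted by
`κ = 1 + (1 - β̄)/(1 - c)` while `σ̄ ≠ σ(k)`. Conditioning on the independent loss `β(k)`, the LMIs
`Π`, `Ω`, `Ψ` give `E V_{k+1} ≤ (1 - ρₛ) E V_k` between switchings, and `P_p ⪯ μ P_q` costs a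
factor `μ̄ = μ κ` at a switching. The dwell time leaves at most one switching in each window of
`τ_d` steps, so `E V_k` decays like `(μ̄ (1 - ρₛ)^{τ_d})^{k / τ_d}`. Since `x̃(k)` depends only on
`β(0), …, β(k-1)`, all expectations are finite weighted sums over the loss patterns.
-/

open Matrix

section QuadraticForm

variable {ι : Type*} [Fintype ι]

lemma SymNegSemidef.dotProduct_mulVec_nonpos {M : Matrix ι ι ℝ} (h : SymNegSemidef M)
    (z : ι → ℝ) : z ⬝ᵥ (M *ᵥ z) ≤ 0 := by
  have h0 := h.dotProduct_mulVec_nonneg z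
  simp only [star_trivial, neg_mulVec, dotProduct_neg, smul_mulVec, dotProduct_smul, add_mulVec,
    dotProduct_add, dotProduct_transpose_mulVec, smul_eq_mul] at h0
  linarith

lemma dotProduct_mulVec_transpose_mul_mul (X P Y : Matrix ι ι ℝ) (z : ι → ℝ) :
    z ⬝ᵥ ((Xᵀ * P * Y) *ᵥ z) = (X *ᵥ z) ⬝ᵥ (P *ᵥ (Y *ᵥ z)) := by
  rw [← mulVec_mulVec, ← mulVec_mulVec, dotProduct_mulVec, vecMul_transpose]

lemma dotProduct_mulVec_le_of_posSemidef_sub {P Q : Matrix ι ι ℝ} {c : ℝ}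
    (h : (c • Q - P).PosSemidef) (z : ι → ℝ) :
    z ⬝ᵥ (P *ᵥ z) ≤ c * (z ⬝ᵥ (Q *ᵥ z)) := by
  have h0 := h.dotProduct_mulVec_nonneg z
  simp only [star_trivial, sub_mulVec, dotProduct_sub, smul_mulVec, dotProduct_smul,
    smul_eq_mul] at h0
  linarith

lemma dotProduct_mulVec_le_of_transpose_mul_mul_sub {A P : Matrix ι ι ℝ} {c : ℝ}
    (h : SymNegSemidef (Aᵀ * P * A - c • P)) (z : ι → ℝ) :
    (A *ᵥ z) ⬝ᵥ (P *ᵥ (A *ᵥ z)) ≤ c * (z ⬝ᵥ (P *ᵥ z)) := by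
  have h0 := h.dotProduct_mulVec_nonpos z
  rw [sub_mulVec, dotProduct_sub, dotProduct_mulVec_transpose_mul_mul, smul_mulVec,
    dotProduct_smul, smul_eq_mul] at h0
  linarith

lemma Matrix.PosDef.exists_pos_mul_dotProduct_self_le {M : Matrix ι ι ℝ} (hM : M.PosDef) :
    ∃ ε > 0, ∀ z : ι → ℝ, ε * (z ⬝ᵥ z) ≤ z ⬝ᵥ (M *ᵥ z) := by
  rcases isEmpty_or_nonempty ι with hι | hι
  · exact ⟨1, one_pos, fun z => by simp [dotProduct]⟩
  set q : EuclideanSpace ℝ ι → ℝ := fun w => w.ofLp ⬝ᵥ (M *ᵥ w.ofLp)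
  obtain ⟨u, hu, hmin⟩ := (isCompact_sphere (0 : EuclideanSpace ℝ ι) 1).exists_isMinOn
    (NormedSpace.sphere_nonempty.2 zero_le_one) (by fun_prop : Continuous q).continuousOn
  refine ⟨q u, hM.dotProduct_mulVec_pos fun h => by simp_all, fun z => ?_⟩
  rcases eq_or_ne z 0 with rfl | hz
  · simp
  set w := WithLp.toLp 2 z
  have hw : 0 < ‖w‖ := norm_pos_iff.2 (by simpa [w] using hz)
  have hzz : z ⬝ᵥ z = ‖w‖ ^ 2 := by
    rw [EuclideanSpace.real_norm_sq_eq]; simp [w, dotProduct, sq]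
  have hle : q u ≤ ‖w‖⁻¹ * (‖w‖⁻¹ * (z ⬝ᵥ (M *ᵥ z))) := by
    simpa [q, w, mulVec_smul, norm_smul, hw.ne'] using
      hmin (a := ‖w‖⁻¹ • w) (by simp [norm_smul, hw.ne'])
  rw [hzz]
  field_simp at hle
  linarith

lemma exists_pos_forall_mul_dotProduct_self_le {κ : Type*} [Finite κ] {P : κ → Matrix ι ι ℝ}
    (hP : ∀ p, (P p).PosDef) : ∃ ε > 0, ∀ p z, ε * (z ⬝ᵥ z) ≤ z ⬝ᵥ (P p *ᵥ z) := by
  have : ∀ᶠ ε in nhdsWithin 0 (Set.Ioi 0), ∀ p z, ε * (z ⬝ᵥ z) ≤ z ⬝ᵥ (P p *ᵥ z) :=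
    Filter.eventually_all.2 fun p => by
      obtain ⟨ε, hε, h⟩ := (hP p).exists_pos_mul_dotProduct_self_le
      filter_upwards [Ioo_mem_nhdsGT hε] with δ hδ z
      exact (mul_le_mul_of_nonneg_right hδ.2.le
        (Finset.sum_nonneg fun _ _ => mul_self_nonneg _)).trans (h z)
  obtain ⟨ε, hε, hpos⟩ := (this.and self_mem_nhdsWithin).exists
  exact ⟨ε, hpos, hε⟩

end QuadraticForm

section BlockMatrices

variable {n : ℕ} (A BK : Matrix (Fin n) (Fin n) ℝ) (P : Matrix (Fin n ⊕ Fin n) (Fin n ⊕ Fin n) ℝ)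

lemma blkA1d_eq (bB : ℝ) :
    blkA1d n A BK bB = bB • blkAbar1 n A BK + (1 - bB) • blkAt1d n A BK := by
  rw [blkA1d, blkAbar1, blkAt1d, fromBlocks_smul, fromBlocks_smul, fromBlocks_add]
  congr 1 <;> module

lemma blkA2_sub_blkA3 : blkA2 n BK - blkA3 n BK = blkAbar1 n A BK - blkAt1d n A BK := by
  ext (i | i) (j | j) <;> simp [blkA2, blkA3, blkAbar1, blkAt1d]

/-- `Π_p` is the mean one-step growth of the Lyapunov form when no packet is lost (`Ã¹_p`,
probability `1 - β̄`) or the last one is held (`Ā¹_{pp}`, probability `β̄`). -/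
lemma dotProduct_PiMatD_mulVec (bB rhoS : ℝ) (z : Fin n ⊕ Fin n → ℝ) :
    z ⬝ᵥ (PiMatD n A BK P bB rhoS *ᵥ z)
      = bB * ((blkAbar1 n A BK *ᵥ z) ⬝ᵥ (P *ᵥ (blkAbar1 n A BK *ᵥ z)))
        + (1 - bB) * ((blkAt1d n A BK *ᵥ z) ⬝ᵥ (P *ᵥ (blkAt1d n A BK *ᵥ z)))
        - (1 - rhoS) * (z ⬝ᵥ (P *ᵥ z)) := by
  have h23 : blkA2 n BK *ᵥ z = blkA3 n BK *ᵥ z + (blkAbar1 n A BK *ᵥ z - blkAt1d n A BK *ᵥ z) := by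
    rw [← sub_mulVec, ← blkA2_sub_blkA3 A, sub_mulVec, add_sub_cancel]
  simp only [PiMatD, add_mulVec, sub_mulVec, smul_mulVec, dotProduct_add, dotProduct_sub,
    dotProduct_smul, dotProduct_mulVec_transpose_mul_mul, blkA1d_eq, h23, mulVec_add, mulVec_sub,
    mulVec_smul, add_dotProduct, sub_dotProduct, smul_dotProduct, smul_eq_mul]
  ring

lemma PiMatD_step_le {bB rhoS : ℝ} (h : SymNegSemidef (PiMatD n A BK P bB rhoS))
    (z : Fin n ⊕ Fin n → ℝ) :
    bB * ((blkAbar1 n A BK *ᵥ z) ⬝ᵥ (P *ᵥ (blkAbar1 n A BK *ᵥ z)))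
        + (1 - bB) * ((blkAt1d n A BK *ᵥ z) ⬝ᵥ (P *ᵥ (blkAt1d n A BK *ᵥ z)))
      ≤ (1 - rhoS) * (z ⬝ᵥ (P *ᵥ z)) := by
  have h0 := h.dotProduct_mulVec_nonpos z
  rw [dotProduct_PiMatD_mulVec] at h0
  linarith

end BlockMatrices

section DesyncWeight

/-- `κ = 1 + (1 - β̄) / (1 - c)`, the weight of the Lyapunov function on desynchronized modes;
it turns the switching penalty `μ` into the `μ̄ = μ κ` of the dwell-time condition. -/
def desyncWeight (pr c : ℝ) : ℝ := (2 - pr - c) / (1 - c)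

variable {pr c : ℝ}

lemma one_le_desyncWeight (hpr : pr ≤ 1) (hc : c < 1) : 1 ≤ desyncWeight pr c := by
  rw [desyncWeight, le_div_iff₀ (by linarith)]; linarith

lemma sub_add_mul_desyncWeight_le (hc : c < 1) :
    1 - pr + desyncWeight pr c * c ≤ desyncWeight pr c := by
  have h : desyncWeight pr c * (1 - c) = 2 - pr - c := div_mul_cancel₀ _ (by linarith)
  nlinarith

lemma add_sub_le_desyncWeight (hpr : 0 ≤ pr ∧ pr ≤ 1) (hc : c < 1) :
    c + (1 - pr) ≤ desyncWeight pr c := by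
  rw [desyncWeight, le_div_iff₀ (by linarith)]
  nlinarith [sq_nonneg (2 * c - 1 - pr), mul_nonneg (sub_nonneg.2 hpr.2) (by linarith : 0 ≤ 3 + pr)]

end DesyncWeight

section Bernoulli

def bernoulliWeight (p : ℝ) {k : ℕ} (a : Fin k → Bool) : ℝ := ∏ i, if a i then p else 1 - p

def bernoulliExpect (p : ℝ) (k : ℕ) (g : (Fin k → Bool) → ℝ) : ℝ :=
  ∑ a, bernoulliWeight p a * g a

variable {p : ℝ} {k : ℕ}

lemma bernoulliWeight_nonneg (hp : 0 ≤ p ∧ p ≤ 1) (a : Fin k → Bool) :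
    0 ≤ bernoulliWeight p a :=
  Finset.prod_nonneg fun i _ => by split_ifs <;> linarith

lemma bernoulliWeight_snoc (a : Fin k → Bool) (b : Bool) :
    bernoulliWeight p (Fin.snoc a b : Fin (k + 1) → Bool)
      = bernoulliWeight p a * if b then p else 1 - p := by
  simp [bernoulliWeight, Fin.prod_univ_castSucc]

lemma bernoulliExpect_mono (hp : 0 ≤ p ∧ p ≤ 1) {g h : (Fin k → Bool) → ℝ} (hgh : ∀ a, g a ≤ h a) :
    bernoulliExpect p k g ≤ bernoulliExpect p k h :=
  Finset.sum_le_sum fun a _ => mul_le_mul_of_nonneg_left (hgh a) (bernoulliWeight_nonneg hp a)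

lemma bernoulliExpect_nonneg (hp : 0 ≤ p ∧ p ≤ 1) {g : (Fin k → Bool) → ℝ} (hg : ∀ a, 0 ≤ g a) :
    0 ≤ bernoulliExpect p k g :=
  Finset.sum_nonneg fun a _ => mul_nonneg (bernoulliWeight_nonneg hp a) (hg a)

lemma bernoulliExpect_const_mul (c : ℝ) (g : (Fin k → Bool) → ℝ) :
    bernoulliExpect p k (fun a => c * g a) = c * bernoulliExpect p k g := by
  simp only [bernoulliExpect, Finset.mul_sum, mul_left_comm]

lemma bernoulliExpect_succ (g : (Fin (k + 1) → Bool) → ℝ) :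
    bernoulliExpect p (k + 1) g
      = bernoulliExpect p k fun a => p * g (Fin.snoc a true) + (1 - p) * g (Fin.snoc a false) := by
  rw [bernoulliExpect, ← (Fin.snocEquiv fun _ => Bool).sum_comp, Fintype.sum_prod_type,
    Finset.sum_comm]
  refine Finset.sum_congr rfl fun a _ => ?_
  simp only [Fin.snocEquiv, Equiv.coe_fn_mk, Fintype.sum_bool, bernoulliWeight_snoc, if_true,
    Bool.false_eq_true, if_false]
  ring

variable {Ω : Type*} [MeasurableSpace Ω]

def bitsOf (β : ℕ → Ω → ℝ) (k : ℕ) (ω : Ω) : Fin k → Bool := fun i => decide (β i ω = 1)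

lemma integral_comp_bitsOf (μ : Measure Ω) [IsProbabilityMeasure μ] (β : ℕ → Ω → ℝ)
    (hβm : ∀ k, Measurable (β k)) (hindep : iIndepFun β μ)
    (hβprob : ∀ k, μ {ω | β k ω = 1} = ENNReal.ofReal p) (hp : 0 ≤ p ∧ p ≤ 1)
    (g : (Fin k → Bool) → ℝ) :
    ∫ ω, g (bitsOf β k ω) ∂μ = bernoulliExpect p k g := by
  have hbits : Measurable (bitsOf β k) :=
    measurable_pi_lambda _ fun i => measurable_to_bool (by
      simpa [bitsOf, Set.preimage] using hβm i (measurableSet_singleton 1))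
  have hatom (a : Fin k → Bool) : μ (bitsOf β k ⁻¹' {a})
      = ENNReal.ofReal (bernoulliWeight p a) := by
    have hset : bitsOf β k ⁻¹' {a} = ⋂ i : Fin k, β i ⁻¹' (if a i then {1} else {1}ᶜ) := by
      ext ω
      simp only [Set.mem_preimage, Set.mem_singleton_iff, Set.mem_iInter, funext_iff, bitsOf]
      refine forall_congr' fun i => ?_
      cases a i <;> simp [eq_comm]
    have hone (i : ℕ) : μ (β i ⁻¹' {1}) = ENNReal.ofReal p := hβprob i
    rw [hset, (hindep.precomp Fin.val_injective).meas_iInter fun i =>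
      ⟨_, by split_ifs <;> simp, rfl⟩, bernoulliWeight,
      ENNReal.ofReal_prod_of_nonneg fun i _ => by split_ifs <;> linarith]
    refine Finset.prod_congr rfl fun i _ => ?_
    split_ifs
    · exact hone i
    · rw [Set.preimage_compl, prob_compl_eq_one_sub (hβm i (measurableSet_singleton 1)), hone,
        ENNReal.ofReal_sub _ hp.1, ENNReal.ofReal_one]
  rw [← integral_map hbits.aemeasurable (Measurable.of_discrete).aestronglyMeasurable,
    integral_fintype Integrable.of_finite]
  refine Finset.sum_congr rfl fun a _ => ?_
  rw [measureReal_def, Measure.map_apply hbits (measurableSet_singleton a), hatom,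
    ENNReal.toReal_ofReal (bernoulliWeight_nonneg hp a), smul_eq_mul]

end Bernoulli

section DwellTime

lemma le_prod_Ico_mul_of_le_mul {T g : ℕ → ℝ} (hg : ∀ k, 0 ≤ g k)
    (hT : ∀ k, T (k + 1) ≤ g k * T k) (k l : ℕ) :
    T (k + l) ≤ (∏ i ∈ Finset.Ico k (k + l), g i) * T k := by
  induction l with
  | zero => simp
  | succ l ih =>
    rw [← add_assoc, Finset.prod_Ico_succ_top (by omega), mul_comm _ (g _), mul_assoc]
    exact (hT _).trans (mul_le_mul_of_nonneg_left ih (hg _))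

variable {m : ℕ} {σ : ℕ → Fin m} {τ : ℕ}

lemma HasDwellTime.card_filter_switch_le_one (hσ : HasDwellTime σ τ) {k l : ℕ} (hl : l ≤ τ) :
    ((Finset.Ico k (k + l)).filter fun i => σ (i + 1) ≠ σ i).card ≤ 1 := by
  refine Finset.card_le_one.2 fun i hi j hj => ?_
  simp only [Finset.mem_filter, Finset.mem_Ico] at hi hj
  by_contra hij
  rcases lt_or_gt_of_ne hij with h | h
  · have := hσ i j h hi.2 hj.2; omega
  · have := hσ j i h hj.2 hi.2; omega

lemma HasDwellTime.prod_Ico_ite_mul_le (hσ : HasDwellTime σ τ) {ν lam : ℝ} (hν : 1 ≤ ν)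
    (hlam : 0 ≤ lam) {k l : ℕ} (hl : l ≤ τ) :
    ∏ i ∈ Finset.Ico k (k + l), (if σ (i + 1) = σ i then 1 else ν) * lam ≤ ν * lam ^ l := by
  rw [Finset.prod_mul_distrib, Finset.prod_const, Nat.card_Ico, Nat.add_sub_cancel_left,
    Finset.prod_ite, Finset.prod_const_one, one_mul, Finset.prod_const]
  gcongr
  exact (pow_le_pow_right₀ hν (hσ.card_filter_switch_le_one hl)).trans_eq (pow_one ν)

theorem HasDwellTime.tendsto_zero_of_le_mul (hσ : HasDwellTime σ τ) {T : ℕ → ℝ} {ν lam : ℝ}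
    (hT : ∀ k, 0 ≤ T k) (hν : 1 ≤ ν) (hlam : 0 ≤ lam) (hθ : ν * lam ^ τ < 1)
    (hstep : ∀ k, T (k + 1) ≤ (if σ (k + 1) = σ k then 1 else ν) * lam * T k) :
    Tendsto T atTop (nhds 0) := by
  set θ := ν * lam ^ τ
  have hτ : τ ≠ 0 := by rintro rfl; simp [θ] at hθ; linarith
  have hlam1 : lam ≤ 1 := by
    by_contra! h
    nlinarith [one_le_pow₀ (n := τ) h.le]
  have hprod := le_prod_Ico_mul_of_le_mul (fun k => by positivity) hstep
  have hblock (q : ℕ) : T (q * τ) ≤ θ ^ q * T 0 := by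
    induction q with
    | zero => simp
    | succ q ih =>
      calc T ((q + 1) * τ) ≤ θ * T (q * τ) := by
            rw [add_one_mul]
            exact (hprod _ _).trans (mul_le_mul_of_nonneg_right
              (hσ.prod_Ico_ite_mul_le hν hlam le_rfl) (hT _))
        _ ≤ θ * (θ ^ q * T 0) := mul_le_mul_of_nonneg_left ih (by positivity)
        _ = θ ^ (q + 1) * T 0 := by ring
  have hbound (k : ℕ) : T k ≤ ν * T 0 * θ ^ (k / τ) := by
    calc T k = T (k / τ * τ + k % τ) := by rw [Nat.div_add_mod']
      _ ≤ ν * lam ^ (k % τ) * T (k / τ * τ) :=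
          (hprod _ _).trans (mul_le_mul_of_nonneg_right
            (hσ.prod_Ico_ite_mul_le hν hlam (Nat.mod_lt _ (Nat.pos_of_ne_zero hτ)).le) (hT _))
      _ ≤ ν * 1 * (θ ^ (k / τ) * T 0) :=
          mul_le_mul (mul_le_mul_of_nonneg_left (pow_le_one₀ hlam hlam1) (by positivity))
            (hblock _) (hT _) (by positivity)
      _ = ν * T 0 * θ ^ (k / τ) := by ring
  have hlim : Tendsto (fun k => ν * T 0 * θ ^ (k / τ)) atTop (nhds 0) := by
    simpa using ((tendsto_pow_atTop_nhds_zero_of_lt_one (by positivity) hθ).comp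
      (Nat.tendsto_div_const_atTop hτ)).const_mul (ν * T 0)
  exact squeeze_zero hT hbound hlim

end DwellTime

section DosTrajectory

variable {N : Type*} [Fintype N] {m : ℕ} (Ahold : Fin m → Fin m → Matrix N N ℝ)
  (Aupd : Fin m → Matrix N N ℝ) (σ : ℕ → Fin m)

/-- A state is `(x̃, σ̄)`, `σ̄` being the mode held by the controller. If `lost` (`β(k) = 1`) the
controller keeps its input and mode; otherwise it receives `x(k)` and `σ(k)`. -/
def dosStep (k : ℕ) (lost : Bool) (t : (N → ℝ) × Fin m) : (N → ℝ) × Fin m :=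
  if lost then (Ahold (σ k) t.2 *ᵥ t.1, t.2) else (Aupd (σ k) *ᵥ t.1, σ k)

def dosTraj (t₀ : (N → ℝ) × Fin m) : (k : ℕ) → (Fin k → Bool) → (N → ℝ) × Fin m
  | 0, _ => t₀
  | k + 1, a => dosStep Ahold Aupd σ k (a (Fin.last k)) (dosTraj t₀ k (Fin.init a))

lemma dosTraj_snoc (t₀ : (N → ℝ) × Fin m) (k : ℕ) (a : Fin k → Bool) (b : Bool) :
    dosTraj Ahold Aupd σ t₀ (k + 1) (Fin.snoc a b)
      = dosStep Ahold Aupd σ k b (dosTraj Ahold Aupd σ t₀ k a) := by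
  simp [dosTraj]

lemma bernoulliExpect_dosTraj_succ_le {F : ℕ → (N → ℝ) × Fin m → ℝ} {p : ℝ} (hp : 0 ≤ p ∧ p ≤ 1)
    {g : ℕ → ℝ} (hF : ∀ k t, p * F (k + 1) (dosStep Ahold Aupd σ k true t)
      + (1 - p) * F (k + 1) (dosStep Ahold Aupd σ k false t) ≤ g k * F k t)
    (t₀ : (N → ℝ) × Fin m) (k : ℕ) :
    bernoulliExpect p (k + 1) (fun a => F (k + 1) (dosTraj Ahold Aupd σ t₀ (k + 1) a))
      ≤ g k * bernoulliExpect p k (fun a => F k (dosTraj Ahold Aupd σ t₀ k a)) := by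
  rw [bernoulliExpect_succ, ← bernoulliExpect_const_mul]
  refine bernoulliExpect_mono hp fun a => ?_
  simp only [dosTraj_snoc]
  exact hF k _

def dosLyapunov (P : Fin m → Matrix N N ℝ) (κ : ℝ) (k : ℕ) (t : (N → ℝ) × Fin m) : ℝ :=
  (if t.2 = σ k then 1 else κ) * (t.1 ⬝ᵥ (P (σ k) *ᵥ t.1))

variable {P : Fin m → Matrix N N ℝ} (hP : ∀ p z, 0 ≤ z ⬝ᵥ (P p *ᵥ z)) {κ : ℝ} (hκ : 1 ≤ κ)
include hP hκ

lemma dosLyapunov_nonneg (k : ℕ) (t : (N → ℝ) × Fin m) : 0 ≤ dosLyapunov σ P κ k t :=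
  mul_nonneg (by split_ifs <;> linarith) (hP _ _)

lemma dotProduct_mulVec_le_dosLyapunov (k : ℕ) (t : (N → ℝ) × Fin m) :
    t.1 ⬝ᵥ (P (σ k) *ᵥ t.1) ≤ dosLyapunov σ P κ k t :=
  le_mul_of_one_le_left (hP _ _) (by split_ifs <;> linarith)

variable {pr lam γ c μ : ℝ} (hpr : 0 ≤ pr ∧ pr ≤ 1) (hlam : 0 ≤ lam) (hγ : pr * γ ≤ c * lam)
  (hsync : ∀ p z, pr * ((Ahold p p *ᵥ z) ⬝ᵥ (P p *ᵥ (Ahold p p *ᵥ z)))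
      + (1 - pr) * ((Aupd p *ᵥ z) ⬝ᵥ (P p *ᵥ (Aupd p *ᵥ z))) ≤ lam * (z ⬝ᵥ (P p *ᵥ z)))
  (hhold : ∀ p q, p ≠ q → ∀ z,
      (Ahold p q *ᵥ z) ⬝ᵥ (P p *ᵥ (Ahold p q *ᵥ z)) ≤ γ * (z ⬝ᵥ (P p *ᵥ z)))
  (hupd : ∀ p z, (Aupd p *ᵥ z) ⬝ᵥ (P p *ᵥ (Aupd p *ᵥ z)) ≤ lam * (z ⬝ᵥ (P p *ᵥ z)))
include hpr hlam hγ hsync hhold hupd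

lemma dosLyapunov_step_of_eq (hκc : 1 - pr + κ * c ≤ κ) {k : ℕ} (hk : σ (k + 1) = σ k)
    (t : (N → ℝ) × Fin m) :
    pr * dosLyapunov σ P κ (k + 1) (dosStep Ahold Aupd σ k true t)
      + (1 - pr) * dosLyapunov σ P κ (k + 1) (dosStep Ahold Aupd σ k false t)
      ≤ lam * dosLyapunov σ P κ k t := by
  obtain ⟨z, s⟩ := t
  by_cases hs : s = σ k
  · subst hs; simpa [dosLyapunov, dosStep, hk] using hsync (σ k) z
  · have h1 := hhold (σ k) s (Ne.symm hs) z
    have h2 := hupd (σ k) z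
    have hQ := hP (σ k) z
    simp only [dosLyapunov, dosStep, hk, hs, Bool.false_eq_true, if_true, if_false, one_mul]
    have hκ0 : 0 ≤ κ := by linarith
    linarith [mul_le_mul_of_nonneg_left h1 (mul_nonneg hpr.1 hκ0),
      mul_le_mul_of_nonneg_left h2 (sub_nonneg.2 hpr.2),
      mul_le_mul_of_nonneg_left hγ (mul_nonneg hκ0 hQ),
      mul_le_mul_of_nonneg_right hκc (mul_nonneg hlam hQ)]

lemma dosLyapunov_step_of_ne (hκc : c + (1 - pr) ≤ κ) (hμ : 0 ≤ μ)
    (hjump : ∀ p q, p ≠ q → ∀ z, z ⬝ᵥ (P p *ᵥ z) ≤ μ * (z ⬝ᵥ (P q *ᵥ z))) {k : ℕ}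
    (hk : σ (k + 1) ≠ σ k) (t : (N → ℝ) × Fin m) :
    pr * dosLyapunov σ P κ (k + 1) (dosStep Ahold Aupd σ k true t)
      + (1 - pr) * dosLyapunov σ P κ (k + 1) (dosStep Ahold Aupd σ k false t)
      ≤ μ * κ * lam * dosLyapunov σ P κ k t := by
  have hκ0 : 0 ≤ κ := by linarith
  have hV (t' : (N → ℝ) × Fin m) :
      dosLyapunov σ P κ (k + 1) t' ≤ κ * μ * (t'.1 ⬝ᵥ (P (σ k) *ᵥ t'.1)) := by
    calc dosLyapunov σ P κ (k + 1) t' ≤ κ * (t'.1 ⬝ᵥ (P (σ (k + 1)) *ᵥ t'.1)) :=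
          mul_le_mul_of_nonneg_right (by split_ifs <;> linarith) (hP _ _)
      _ ≤ κ * (μ * (t'.1 ⬝ᵥ (P (σ k) *ᵥ t'.1))) :=
          mul_le_mul_of_nonneg_left (hjump _ _ hk _) hκ0
      _ = _ := by ring
  obtain ⟨z, s⟩ := t
  have hmean : pr * ((Ahold (σ k) s *ᵥ z) ⬝ᵥ (P (σ k) *ᵥ (Ahold (σ k) s *ᵥ z)))
        + (1 - pr) * ((Aupd (σ k) *ᵥ z) ⬝ᵥ (P (σ k) *ᵥ (Aupd (σ k) *ᵥ z)))
      ≤ (if s = σ k then 1 else κ) * lam * (z ⬝ᵥ (P (σ k) *ᵥ z)) := by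
    by_cases hs : s = σ k
    · subst hs; simpa using hsync (σ k) z
    · have hQ := hP (σ k) z
      simp only [hs, if_false]
      linarith [mul_le_mul_of_nonneg_left (hhold (σ k) s (Ne.symm hs) z) hpr.1,
        mul_le_mul_of_nonneg_left (hupd (σ k) z) (sub_nonneg.2 hpr.2),
        mul_le_mul_of_nonneg_right hγ hQ, mul_le_mul_of_nonneg_right hκc (mul_nonneg hlam hQ)]
  calc _ ≤ pr * (κ * μ * ((Ahold (σ k) s *ᵥ z) ⬝ᵥ (P (σ k) *ᵥ (Ahold (σ k) s *ᵥ z))))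
        + (1 - pr) * (κ * μ * ((Aupd (σ k) *ᵥ z) ⬝ᵥ (P (σ k) *ᵥ (Aupd (σ k) *ᵥ z)))) :=
        add_le_add (mul_le_mul_of_nonneg_left (hV _) hpr.1)
          (mul_le_mul_of_nonneg_left (hV _) (sub_nonneg.2 hpr.2))
    _ ≤ κ * μ * ((if s = σ k then 1 else κ) * lam * (z ⬝ᵥ (P (σ k) *ᵥ z))) := by
        linarith [mul_le_mul_of_nonneg_left hmean (mul_nonneg hκ0 hμ)]
    _ = μ * κ * lam * dosLyapunov σ P κ k (z, s) := by simp only [dosLyapunov]; ring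

lemma dosLyapunov_step (hκsync : 1 - pr + κ * c ≤ κ) (hκswitch : c + (1 - pr) ≤ κ) (hμ : 0 ≤ μ)
    (hjump : ∀ p q, p ≠ q → ∀ z, z ⬝ᵥ (P p *ᵥ z) ≤ μ * (z ⬝ᵥ (P q *ᵥ z))) (k : ℕ)
    (t : (N → ℝ) × Fin m) :
    pr * dosLyapunov σ P κ (k + 1) (dosStep Ahold Aupd σ k true t)
      + (1 - pr) * dosLyapunov σ P κ (k + 1) (dosStep Ahold Aupd σ k false t)
      ≤ (if σ (k + 1) = σ k then 1 else μ * κ) * lam * dosLyapunov σ P κ k t := by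
  split_ifs with hk
  · simpa using dosLyapunov_step_of_eq Ahold Aupd σ hP hκ hpr hlam hγ hsync hhold hupd hκsync hk t
  · exact dosLyapunov_step_of_ne Ahold Aupd σ hP hκ hpr hlam hγ hsync hhold hupd hκswitch hμ hjump
      hk t

end DosTrajectory

section ClosedLoop

variable {n r m : ℕ} (A : Fin m → Matrix (Fin n) (Fin n) ℝ) (B : Fin m → Matrix (Fin n) (Fin r) ℝ)
  (K : Fin m → Matrix (Fin r) (Fin n) ℝ)

def blkHold (p q : Fin m) : Matrix (Fin n ⊕ Fin n) (Fin n ⊕ Fin n) ℝ := blkAbar1 n (A p) (B p * K q)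

def blkUpd (p : Fin m) : Matrix (Fin n ⊕ Fin n) (Fin n ⊕ Fin n) ℝ := blkAt1d n (A p) (B p * K p)

lemma dosLyapunov_step_of_lmi {σ : ℕ → Fin m} {P : Fin m → Matrix (Fin n ⊕ Fin n) (Fin n ⊕ Fin n) ℝ}
    {betaBar rhoS rhoU c mu : ℝ} (hbetaBar : 0 ≤ betaBar ∧ betaBar ≤ 1) (hrhoS : rhoS < 1)
    (hcdef : c = betaBar * (1 + rhoU) / (1 - rhoS)) (hc1 : c < 1) (hmu : 0 ≤ mu)
    (hP : ∀ p, (P p).PosSemidef)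
    (hPi : ∀ p, SymNegSemidef (PiMatD n (A p) (B p * K p) (P p) betaBar rhoS))
    (hOmega : ∀ p q, p ≠ q → SymNegSemidef (OmegaMat n (A p) (B p * K q) (P p) rhoU))
    (hPsi : ∀ p, SymNegSemidef (PsiMatD n (A p) (B p * K p) (P p) rhoS))
    (hPmu : ∀ p q, p ≠ q → (mu • P q - P p).PosSemidef) (k : ℕ) (t : (Fin n ⊕ Fin n → ℝ) × Fin m) :
    let V := dosLyapunov σ P (desyncWeight betaBar c)
    betaBar * V (k + 1) (dosStep (blkHold A B K) (blkUpd A B K) σ k true t)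
        + (1 - betaBar) * V (k + 1) (dosStep (blkHold A B K) (blkUpd A B K) σ k false t)
      ≤ (if σ (k + 1) = σ k then 1 else mu * desyncWeight betaBar c) * (1 - rhoS) * V k t :=
  dosLyapunov_step (blkHold A B K) (blkUpd A B K) σ
    (fun p z => by simpa using (hP p).dotProduct_mulVec_nonneg z)
    (one_le_desyncWeight hbetaBar.2 hc1) hbetaBar (by linarith)
    (by rw [hcdef, div_mul_cancel₀ _ (by linarith)])
    (fun p => PiMatD_step_le (A p) (B p * K p) (P p) (hPi p))
    (fun p q hpq =>
      dotProduct_mulVec_le_of_transpose_mul_mul_sub (A := blkHold A B K p q) (hOmega p q hpq))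
    (fun p => dotProduct_mulVec_le_of_transpose_mul_mul_sub (A := blkUpd A B K p) (hPsi p))
    (sub_add_mul_desyncWeight_le hc1) (add_sub_le_desyncWeight hbetaBar hc1) hmu
    (fun p q hpq => dotProduct_mulVec_le_of_posSemidef_sub (hPmu p q hpq)) k t

lemma blkHold_mulVec_sumElim (p q : Fin m) (u v : Fin n → ℝ) :
    blkHold A B K p q *ᵥ Sum.elim u v = Sum.elim (A p *ᵥ u + B p *ᵥ (K q *ᵥ v)) v := by
  simp [blkHold, blkAbar1, fromBlocks_mulVec, mulVec_mulVec]

lemma blkUpd_mulVec_sumElim (p : Fin m) (u v : Fin n → ℝ) :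
    blkUpd A B K p *ᵥ Sum.elim u v = Sum.elim (A p *ᵥ u + B p *ᵥ (K p *ᵥ u)) u := by
  simp [blkUpd, blkAt1d, fromBlocks_mulVec, add_mulVec, mulVec_mulVec]

lemma sumElim_eq_dosTraj (σ : ℕ → Fin m) {Ω : Type*} (β : ℕ → Ω → ℝ)
    (hβ01 : ∀ k ω, β k ω = 0 ∨ β k ω = 1)
    (x0 xbar0 : Fin n → ℝ) (x y : ℕ → Ω → Fin n → ℝ) (s : ℕ → Ω → Fin m)
    (hx0 : ∀ ω, x 0 ω = x0) (hy0 : ∀ ω, y 0 ω = xbar0) (hs0 : ∀ ω, s 0 ω = σ 0)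
    (hy : ∀ k ω, y (k + 1) ω = (1 - β k ω) • x k ω + β k ω • y k ω)
    (hs : ∀ k ω, s (k + 1) ω = if β k ω = 1 then s k ω else σ k)
    (hx : ∀ k ω, x (k + 1) ω
      = A (σ k) *ᵥ x k ω + B (σ k) *ᵥ (K (s (k + 1) ω) *ᵥ y (k + 1) ω)) (k : ℕ) (ω : Ω) :
    (Sum.elim (x k ω) (y k ω), s k ω)
      = dosTraj (blkHold A B K) (blkUpd A B K) σ (Sum.elim x0 xbar0, σ 0) k (bitsOf β k ω) := by
  induction k with
  | zero => simp [dosTraj, hx0, hy0, hs0]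
  | succ k ih =>
    change _ = dosStep _ _ σ k (decide (β k ω = 1)) (dosTraj _ _ σ _ k (bitsOf β k ω))
    rw [← ih]
    rcases hβ01 k ω with h | h <;>
      simp [dosStep, h, hx, hy, hs, blkHold_mulVec_sumElim, blkUpd_mulVec_sumElim]

end ClosedLoop

theorem stmt2_general (n r m : ℕ)
    (A : Fin m → Matrix (Fin n) (Fin n) ℝ) (B : Fin m → Matrix (Fin n) (Fin r) ℝ)
    (K : Fin m → Matrix (Fin r) (Fin n) ℝ) (σ : ℕ → Fin m)
    {Ω : Type*} [MeasurableSpace Ω] (μ : Measure Ω) [IsProbabilityMeasure μ]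
    -- DoS attack process
    (β : ℕ → Ω → ℝ) (hβm : ∀ k, Measurable (β k))
    (hβ01 : ∀ k ω, β k ω = 0 ∨ β k ω = 1)
    (hindep : iIndepFun β μ)
    (betaBar : ℝ) (hbetaBar : 0 ≤ betaBar ∧ betaBar ≤ 1)
    (hβprob : ∀ k, μ {ω | β k ω = 1} = ENNReal.ofReal betaBar)
    -- scalar hypotheses
    (mu rhoS rhoU c muBar : ℝ)
    (hmu : 1 < mu) (hrhoS : 0 < rhoS ∧ rhoS < 1)
    (hcdef : c = betaBar * (1 + rhoU) / (1 - rhoS)) (hc1 : c < 1)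
    (hmuBar : muBar = mu * (2 - betaBar - c) / (1 - c))
    -- LMI hypotheses
    (P : Fin m → Matrix (Fin n ⊕ Fin n) (Fin n ⊕ Fin n) ℝ) (hP : ∀ p, (P p).PosDef)
    (hPi : ∀ p, SymNegSemidef (PiMatD n (A p) (B p * K p) (P p) betaBar rhoS))
    (hOmega : ∀ p q, p ≠ q → SymNegSemidef (OmegaMat n (A p) (B p * K q) (P p) rhoU))
    (hPsi : ∀ p, SymNegSemidef (PsiMatD n (A p) (B p * K p) (P p) rhoS))
    (hPmu : ∀ p q, p ≠ q → (mu • P q - P p).PosSemidef)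
    -- dwell-time hypotheses on the switching signal
    (tauD : ℕ) (hdwell : HasDwellTime σ tauD)
    (htau : muBar * (1 - rhoS) ^ tauD < 1)
    -- closed-loop processes: `y k = x̄(k-1)`, `s k = σ̄(k-1)`
    (x0 xbar0 : Fin n → ℝ) (x y : ℕ → Ω → Fin n → ℝ) (s : ℕ → Ω → Fin m)
    (hx0 : ∀ ω, x 0 ω = x0) (hy0 : ∀ ω, y 0 ω = xbar0) (hs0 : ∀ ω, s 0 ω = σ 0)
    (hy : ∀ k ω, y (k + 1) ω = (1 - β k ω) • x k ω + β k ω • y k ω)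
    (hs : ∀ k ω, s (k + 1) ω = if β k ω = 1 then s k ω else σ k)
    (hx : ∀ k ω, x (k + 1) ω
      = A (σ k) *ᵥ x k ω + B (σ k) *ᵥ (K (s (k + 1) ω) *ᵥ y (k + 1) ω)) :
    Tendsto
      (fun k : ℕ => ∫ ω, Sum.elim (x k ω) (y k ω) ⬝ᵥ Sum.elim (x k ω) (y k ω) ∂μ)
      atTop (nhds 0) := by
  have hQ (p : Fin m) (z : Fin n ⊕ Fin n → ℝ) : 0 ≤ z ⬝ᵥ (P p *ᵥ z) := by
    simpa using (hP p).posSemidef.dotProduct_mulVec_nonneg z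
  have hκ := one_le_desyncWeight hbetaBar.2 hc1
  have hmuκ : muBar = mu * desyncWeight betaBar c := by rw [hmuBar, mul_div_assoc]; rfl
  set V := dosLyapunov σ P (desyncWeight betaBar c)
  set Z := dosTraj (blkHold A B K) (blkUpd A B K) σ (Sum.elim x0 xbar0, σ 0)
  have hV : Tendsto (fun k => bernoulliExpect betaBar k fun a => V k (Z k a)) atTop (nhds 0) :=
    hdwell.tendsto_zero_of_le_mul
      (fun k => bernoulliExpect_nonneg hbetaBar fun a => dosLyapunov_nonneg σ hQ hκ k _)
      (by rw [hmuκ]; nlinarith) (sub_nonneg.2 hrhoS.2.le) htau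
      (bernoulliExpect_dosTraj_succ_le _ _ σ hbetaBar (hmuκ ▸ dosLyapunov_step_of_lmi A B K hbetaBar
        hrhoS.2 hcdef hc1 (by linarith) (fun p => (hP p).posSemidef) hPi hOmega hPsi hPmu) _)
  obtain ⟨ε, hε, hεP⟩ := exists_pos_forall_mul_dotProduct_self_le hP
  have hZ (k : ℕ) (ω : Ω) : Sum.elim (x k ω) (y k ω) = (Z k (bitsOf β k ω)).1 :=
    congrArg Prod.fst (sumElim_eq_dosTraj A B K σ β hβ01 x0 xbar0 x y s hx0 hy0 hs0 hy hs hx k ω)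
  refine squeeze_zero
    (fun k => integral_nonneg fun ω => Finset.sum_nonneg fun _ _ => mul_self_nonneg _) (fun k => ?_)
    (by simpa using hV.const_mul ε⁻¹)
  simp_rw [hZ]
  rw [integral_comp_bitsOf μ β hβm hindep hβprob hbetaBar (fun a => (Z k a).1 ⬝ᵥ (Z k a).1),
    ← bernoulliExpect_const_mul]
  refine bernoulliExpect_mono hbetaBar fun a => ?_
  rw [le_inv_mul_iff₀ hε]
  exact (hεP _ _).trans (dotProduct_mulVec_le_dosLyapunov σ hQ hκ k _)

/-- **Corollary 2.** DoS attack only: under the LMI conditions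
`Π_p ⪯ 0`, `Ω_{pq} ⪯ 0`, `Ψ_p ⪯ 0`, `P_p ⪯ μP_q`, `c < 1` and the dwell-time
condition `μ̄(1-ρₛ)^{τ_d} < 1`, the switched closed loop subject to DoS attack is
asymptotically stable in the mean square sense: `E‖x̃(k)‖² → 0`. -/
theorem stmt2 (n r m : ℕ)
    (A : Fin m → Matrix (Fin n) (Fin n) ℝ) (B : Fin m → Matrix (Fin n) (Fin r) ℝ)
    (K : Fin m → Matrix (Fin r) (Fin n) ℝ) (σ : ℕ → Fin m)
    {Ω : Type*} [MeasurableSpace Ω] (μ : Measure Ω) [IsProbabilityMeasure μ]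
    -- DoS attack process
    (β : ℕ → Ω → ℝ) (hβm : ∀ k, Measurable (β k))
    (hβ01 : ∀ k ω, β k ω = 0 ∨ β k ω = 1)
    (hindep : iIndepFun β μ)
    (betaBar : ℝ) (hbetaBar : 0 ≤ betaBar ∧ betaBar ≤ 1)
    (hβprob : ∀ k, μ {ω | β k ω = 1} = ENNReal.ofReal betaBar)
    -- scalar hypotheses
    (mu rhoS rhoU c muBar : ℝ)
    (hmu : 1 < mu) (hrhoS : 0 < rhoS ∧ rhoS < 1) (hrhoU : 0 < rhoU)
    (hcdef : c = betaBar * (1 + rhoU) / (1 - rhoS)) (hc1 : c < 1)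
    (hmuBar : muBar = mu * (2 - betaBar - c) / (1 - c))
    -- LMI hypotheses
    (P : Fin m → Matrix (Fin n ⊕ Fin n) (Fin n ⊕ Fin n) ℝ) (hP : ∀ p, (P p).PosDef)
    (hPi : ∀ p, SymNegSemidef (PiMatD n (A p) (B p * K p) (P p) betaBar rhoS))
    (hOmega : ∀ p q, p ≠ q → SymNegSemidef (OmegaMat n (A p) (B p * K q) (P p) rhoU))
    (hPsi : ∀ p, SymNegSemidef (PsiMatD n (A p) (B p * K p) (P p) rhoS))
    (hPmu : ∀ p q, p ≠ q → (mu • P q - P p).PosSemidef)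
    -- dwell-time hypotheses on the switching signal
    (tauD : ℕ) (hdwell : HasDwellTime σ tauD)
    (htau : muBar * (1 - rhoS) ^ tauD < 1)
    -- closed-loop processes: `y k = x̄(k-1)`, `s k = σ̄(k-1)`
    (x0 xbar0 : Fin n → ℝ) (x y : ℕ → Ω → Fin n → ℝ) (s : ℕ → Ω → Fin m)
    (hx0 : ∀ ω, x 0 ω = x0) (hy0 : ∀ ω, y 0 ω = xbar0) (hs0 : ∀ ω, s 0 ω = σ 0)
    (hy : ∀ k ω, y (k + 1) ω = (1 - β k ω) • x k ω + β k ω • y k ω)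
    (hs : ∀ k ω, s (k + 1) ω = if β k ω = 1 then s k ω else σ k)
    (hx : ∀ k ω, x (k + 1) ω
      = A (σ k) *ᵥ x k ω + B (σ k) *ᵥ (K (s (k + 1) ω) *ᵥ y (k + 1) ω)) :
    Tendsto
      (fun k : ℕ => ∫ ω, Sum.elim (x k ω) (y k ω) ⬝ᵥ Sum.elim (x k ω) (y k ω) ∂μ)
      atTop (nhds 0) :=
  stmt2_general n r m A B K σ μ β hβm hβ01 hindep betaBar hbetaBar hβprob mu rhoS rhoU c muBar hmu
    hrhoS hcdef hc1 hmuBar P hP hPi hOmega hPsi hPmu tauD hdwell htau x0 xbar0 x y s hx0 hy0 hs0 hy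
    hs hx
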